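/- arXiv:1609.01224 — 5 statements merged into one kernel-verified Lean document; each statement's English description precedes it below -/
import Mathlib

section
/- Let G be an n×n positive definite real matrix, j ∉ S ⊆ [n], v ∈ ℝ^n, and suppose v_j = G_{j,S} G_{S,S}^{-1} v_S. Define ṽ_S = v_S - (v_j/G_{j,j}) G_{S,j}. Then (G_{S,S} - (1/G_{j,j}) G_{S,j} G_{j,S})^{-1} ṽ_S = G_{S,S}^{-1} v_S. -/
/-!
Write `B = G_{S,S} - G_{j,j}⁻¹ G_{S,j} G_{j,S}` and `w = G_{S,S}⁻¹ v_S`. On the locus,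
`G_{j,S} w = v_j`, so `B w = v_S - (v_j / G_{j,j}) G_{S,j} = ṽ_S`, and it only remains to see
that `B` is invertible. Since `j ∉ S`, `B` is the Schur complement of `G_{j,j}` in the positive
definite principal submatrix of `G` on `S ∪ {j}`, whose determinant is `G_{j,j} det B ≠ 0`.
-/

open Matrix

namespace Matrix

variable {m n K : Type*} [Fintype m] [DecidableEq m]

theorem inv_sub_smul_vecMulVec_mulVec_sub [CommRing K] {A : Matrix m m K} (hA : IsUnit A.det)
    {s t : K} {c r v : m → K} (hB : IsUnit (A - s • vecMulVec c r).det)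
    (ht : t = r ⬝ᵥ A⁻¹ *ᵥ v) :
    (A - s • vecMulVec c r)⁻¹ *ᵥ (v - (s * t) • c) = A⁻¹ *ᵥ v := by
  have hBw : (A - s • vecMulVec c r) *ᵥ (A⁻¹ *ᵥ v) = v - (s * t) • c := by
    rw [sub_mulVec, mulVec_mulVec, mul_nonsing_inv _ hA, one_mulVec, smul_mulVec,
      vecMulVec_mulVec, ← ht, op_smul_eq_smul, smul_smul]
  rw [← hBw, mulVec_mulVec, nonsing_inv_mul _ hB, one_mulVec]

variable [Fintype n] [DecidableEq n] [Field K] [PartialOrder K] [StarRing K]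

theorem PosDef.isUnit_det_schurComplement {M : Matrix (m ⊕ n) (m ⊕ n) K} (hM : M.PosDef)
    [Invertible M.toBlocks₂₂] :
    IsUnit (M.toBlocks₁₁ - M.toBlocks₁₂ * ⅟M.toBlocks₂₂ * M.toBlocks₂₁).det := by
  have hdet := (isUnit_iff_isUnit_det M).mp hM.isUnit
  rw [← fromBlocks_toBlocks M, det_fromBlocks₂₂] at hdet
  exact isUnit_of_mul_isUnit_right hdet

theorem PosDef.isUnit_det_sub_smul_vecMulVec {M : Matrix (m ⊕ Unit) (m ⊕ Unit) K}
    (hM : M.PosDef) :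
    IsUnit (M.toBlocks₁₁ - (M (.inr ()) (.inr ()))⁻¹ •
      vecMulVec (fun a => M (.inl a) (.inr ())) (fun b => M (.inr ()) (.inl b))).det := by
  have hg : M (.inr ()) (.inr ()) ≠ 0 := hM.diag_pos.ne'
  let : Invertible M.toBlocks₂₂ :=
    { invOf := of fun _ _ => (M (.inr ()) (.inr ()))⁻¹
      invOf_mul_self := by ext; simp [mul_apply, toBlocks₂₂, hg]
      mul_invOf_self := by ext; simp [mul_apply, toBlocks₂₂, hg] }
  have hinv : ⅟M.toBlocks₂₂ = of fun _ _ => (M (.inr ()) (.inr ()))⁻¹ := rfl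
  convert hM.isUnit_det_schurComplement using 3
  ext a b
  rw [hinv]
  simp [mul_apply, toBlocks₁₂, toBlocks₂₁, vecMulVec_apply]
  ring

end Matrix

/-- On the locus `v_j = G_{j,S} G_{S,S}⁻¹ v_S`, the updated inverse applied to
`ṽ_S = v_S - (v_j/G_{j,j}) G_{S,j}` agrees with `G_{S,S}⁻¹ v_S`. -/
theorem stmt_4 {n : ℕ} (G : Matrix (Fin n) (Fin n) ℝ) (hG : G.PosDef)
    (j : Fin n) (S : Finset (Fin n)) (hj : j ∉ S) (v : Fin n → ℝ)
    (hv : v j = ∑ i : S, G j i.1 *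
      (G.submatrix (Subtype.val : S → Fin n) Subtype.val)⁻¹.mulVec (fun i' : {x // x ∈ S} => v i'.1) i) :
    letI A : Matrix S S ℝ := G.submatrix Subtype.val Subtype.val
    letI vS : S → ℝ := fun i => v i.1
    letI vtil : S → ℝ := fun i => v i.1 - (v j / G j j) * G i.1 j
    (A - (G j j)⁻¹ • (Matrix.of fun a b : S => G a.1 j * G j b.1))⁻¹.mulVec vtil
      = A⁻¹.mulVec vS := by
  have hA : IsUnit (G.submatrix (Subtype.val : S → Fin n) Subtype.val).det :=
    (isUnit_iff_isUnit_det _).mp (hG.submatrix Subtype.val_injective).isUnit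
  have he : (Sum.elim Subtype.val fun _ => j : S ⊕ Unit → Fin n).Injective :=
    Subtype.val_injective.sumElim (Function.injective_of_subsingleton _)
      fun a _ h => hj (h ▸ a.2)
  have hB := (hG.submatrix he).isUnit_det_sub_smul_vecMulVec
  have hvtil : (fun a : S => v a.1 - v j / G j j * G a.1 j)
      = (fun a : S => v a.1) - ((G j j)⁻¹ * v j) • fun a : S => G a.1 j := by
    ext a
    simp only [Pi.sub_apply, Pi.smul_apply, smul_eq_mul]
    ring
  rw [hvtil]
  exact inv_sub_smul_vecMulVec_mulVec_sub hA hB hv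
end

section
/- Let 𝓜 be a nonsingular real r×r matrix. Then E_r(𝓜; u), defined by E_r(𝓜; u) = ∫_{ℝ^r} e^{-π(u-u')ᵀ(u-u')} ∏_{j=1}^r sign((𝓜ᵀu')_j) d^r u', satisfies the Vignéras equation with λ = 0: ∑_{j=1}^r (∂²_{u_j} + 2π u_j ∂_{u_j}) E_r(𝓜; u) = 0 for all u ∈ ℝ^r. -/
open MeasureTheory Matrix

/-- The `r`-tuple error function. -/
noncomputable def Efun {ι : Type*} [Fintype ι] (M : Matrix ι ι ℝ) (u : ι → ℝ) : ℝ :=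
  ∫ u' : ι → ℝ, Real.exp (-Real.pi * ∑ j, (u j - u' j) ^ 2) *
    ∏ j, Real.sign (Mᵀ.mulVec u' j)

/-- Partial derivative of a function on `ℝ^ι` in the `j`-th coordinate. -/
noncomputable def pderiv {ι : Type*} [Fintype ι] [DecidableEq ι]
    (j : ι) (f : (ι → ℝ) → ℝ) (u : ι → ℝ) : ℝ :=
  deriv (fun t => f (Function.update u j t)) (u j)

/-! Write `E = gaussian ⋆ g` with `gaussian v = exp (-π ∑ vₖ²)` and `g x = ∏ⱼ sign ((Mᵀx)ⱼ)`,
a bounded function invariant under positive dilations. Differentiating twice under the integral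
sign (the Gaussian and its partial derivatives decay fast enough to dominate everything),
`(Δ + 2π u·∇) E (u) = -2π ∫ (n + 2π (u - y)·y) gaussian (u - y) g y dy`.
This integrand is the derivative at `c = 1` of `c ^ n * gaussian (u - c • y) * g y`, and
`c ^ n * ∫ gaussian (u - c • y) g y dy = E u` for every `c > 0` by the substitution `x = c • y`
and the dilation invariance of `g`; so the integral vanishes. -/

open Real Metric Filter Topology

lemma add_mul_mul_exp_neg_le {a b c S : ℝ} (ha : 0 ≤ a) (hb : 0 ≤ b) (hc : 0 < c)
    (hS : 0 ≤ S) : (a + b * S) * exp (-c * S) ≤ (a + 2 * b / c) * exp (-(c / 2) * S) := by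
  have hsplit : exp (-c * S) = exp (-(c / 2) * S) * exp (-(c / 2) * S) := by
    rw [← exp_add]; ring_nf
  have hlin : c / 2 * S + 1 ≤ exp (c / 2 * S) := add_one_le_exp _
  have hS_le : S * exp (-(c / 2) * S) ≤ 2 / c := by
    rw [neg_mul, exp_neg, ← div_eq_mul_inv, div_le_div_iff₀ (exp_pos _) hc]
    nlinarith
  calc (a + b * S) * exp (-c * S)
      = a * exp (-c * S) + b * (S * exp (-(c / 2) * S)) * exp (-(c / 2) * S) := by
        rw [hsplit]; ring
    _ ≤ a * exp (-(c / 2) * S) + b * (2 / c) * exp (-(c / 2) * S) := by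
        gcongr
        linarith
    _ = (a + 2 * b / c) * exp (-(c / 2) * S) := by ring

variable {ι : Type*} [Fintype ι]

lemma sq_le_sum_sq (v : ι → ℝ) (j : ι) : v j ^ 2 ≤ ∑ k, v k ^ 2 :=
  Finset.single_le_sum (fun k _ => sq_nonneg (v k)) (Finset.mem_univ j)

lemma exp_neg_mul_sum_sq_sub_le {c : ℝ} (hc : 0 ≤ c) (w x : ι → ℝ) :
    exp (-c * ∑ k, (w k - x k) ^ 2) ≤
      exp (c * ∑ k, w k ^ 2) * exp (-(c / 2) * ∑ k, x k ^ 2) := by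
  have hsum : (∑ k, x k ^ 2) / 2 - ∑ k, w k ^ 2 ≤ ∑ k, (w k - x k) ^ 2 := by
    rw [Finset.sum_div, ← Finset.sum_sub_distrib]
    exact Finset.sum_le_sum fun k _ => by nlinarith [sq_nonneg (2 * w k - x k)]
  rw [← exp_add]
  exact exp_le_exp.2 (by nlinarith [mul_le_mul_of_nonneg_left hsum hc])

lemma integrable_exp_neg_mul_sum_sq {c : ℝ} (hc : 0 < c) :
    Integrable (fun x : ι → ℝ => exp (-c * ∑ k, x k ^ 2)) := by
  simp_rw [Finset.mul_sum, exp_sum]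
  exact Integrable.fintype_prod fun _ => integrable_exp_neg_mul_sq hc

def HasGaussianDecay (ψ : (ι → ℝ) → ℝ) : Prop :=
  ∃ K c : ℝ, 0 < c ∧ ∀ v, |ψ v| ≤ K * exp (-c * ∑ k, v k ^ 2)

lemma HasGaussianDecay.integrable {ψ : (ι → ℝ) → ℝ} (hψ : HasGaussianDecay ψ)
    (hψc : Continuous ψ) : Integrable ψ := by
  obtain ⟨K, c, hc, hle⟩ := hψ
  exact ((integrable_exp_neg_mul_sum_sq hc).const_mul K).mono' hψc.aestronglyMeasurable
    (ae_of_all _ hle)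

lemma HasGaussianDecay.integrable_comp_sub {ψ : (ι → ℝ) → ℝ} (hψ : HasGaussianDecay ψ)
    (hψc : Continuous ψ) (u : ι → ℝ) : Integrable (fun x => ψ (u - x)) :=
  (integrable_comp_sub_left ψ u).2 (hψ.integrable hψc)

lemma HasGaussianDecay.exists_integrable_bound_comp_sub {ψ : (ι → ℝ) → ℝ}
    (hψ : HasGaussianDecay ψ) (R : ℝ) :
    ∃ bound : (ι → ℝ) → ℝ, Integrable bound ∧
      ∀ w, ∑ k, w k ^ 2 ≤ R → ∀ x, |ψ (w - x)| ≤ bound x := by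
  obtain ⟨K, c, hc, hle⟩ := hψ
  refine ⟨fun x => K * exp (c * R) * exp (-(c / 2) * ∑ k, x k ^ 2),
    (integrable_exp_neg_mul_sum_sq (half_pos hc)).const_mul _, fun w hw x => ?_⟩
  have hK : 0 ≤ K := (abs_nonneg _).trans ((hle 0).trans (by simp))
  calc |ψ (w - x)| ≤ K * exp (-c * ∑ k, (w k - x k) ^ 2) := hle _
    _ ≤ K * (exp (c * R) * exp (-(c / 2) * ∑ k, x k ^ 2)) := by
        gcongr
        refine (exp_neg_mul_sum_sq_sub_le hc.le w x).trans ?_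
        gcongr
    _ = _ := by ring

noncomputable def gaussian (v : ι → ℝ) : ℝ := exp (-π * ∑ k, v k ^ 2)

lemma gaussian_pos (v : ι → ℝ) : 0 < gaussian v := exp_pos _

@[fun_prop]
lemma continuous_gaussian : Continuous (gaussian : (ι → ℝ) → ℝ) := by
  unfold gaussian; fun_prop

lemma hasGaussianDecay_gaussian : HasGaussianDecay (gaussian : (ι → ℝ) → ℝ) :=
  ⟨1, π, pi_pos, fun v => by rw [gaussian, abs_of_pos (exp_pos _), one_mul]⟩

lemma HasDerivAt.gaussian {γ : ℝ → ι → ℝ} {γ' : ι → ℝ} {t : ℝ} (hγ : HasDerivAt γ γ' t) :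
    HasDerivAt (fun s => gaussian (γ s)) (-2 * π * (∑ k, γ t k * γ' k) * gaussian (γ t)) t := by
  have hsum : HasDerivAt (fun s => ∑ k, γ s k ^ 2) (∑ k, 2 * γ t k * γ' k) t :=
    HasDerivAt.fun_sum fun k _ => by
      simpa using (hasDerivAt_pi.1 hγ k).fun_pow 2
  refine ((hsum.const_mul (-π)).exp).congr_deriv ?_
  rw [_root_.gaussian]
  simp only [mul_assoc, ← Finset.mul_sum]
  ring

section Partial

variable (j : ι)

noncomputable def dGaussian (v : ι → ℝ) : ℝ := -2 * π * v j * gaussian v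

noncomputable def ddGaussian (v : ι → ℝ) : ℝ := (4 * π ^ 2 * v j ^ 2 - 2 * π) * gaussian v

lemma continuous_dGaussian : Continuous (dGaussian j : (ι → ℝ) → ℝ) := by
  unfold dGaussian; fun_prop

lemma continuous_ddGaussian : Continuous (ddGaussian j : (ι → ℝ) → ℝ) := by
  unfold ddGaussian; fun_prop

lemma hasDerivAt_gaussian_update [DecidableEq ι] (v : ι → ℝ) :
    HasDerivAt (fun s => gaussian (Function.update v j s)) (dGaussian j v) (v j) := by
  convert (hasDerivAt_update v j (v j)).gaussian using 1
  simp [dGaussian, Pi.single_apply]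

lemma hasDerivAt_dGaussian_update [DecidableEq ι] (v : ι → ℝ) :
    HasDerivAt (fun s => dGaussian j (Function.update v j s)) (ddGaussian j v) (v j) := by
  have h := ((hasDerivAt_id' (v j)).const_mul (-2 * π)).fun_mul (hasDerivAt_gaussian_update j v)
  have hfun : (fun s => dGaussian j (Function.update v j s)) =
      fun s => -2 * π * s * gaussian (Function.update v j s) := by
    funext s; simp [dGaussian]
  rw [hfun]
  refine h.congr_deriv ?_
  rw [Function.update_eq_self, ddGaussian, dGaussian]
  ring

lemma hasGaussianDecay_dGaussian : HasGaussianDecay (dGaussian j : (ι → ℝ) → ℝ) := by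
  refine ⟨2 * π + 4, π / 2, by positivity, fun v => ?_⟩
  set S := ∑ k, v k ^ 2
  have hS : 0 ≤ S := Finset.sum_nonneg fun k _ => sq_nonneg _
  have hvj : |v j| ≤ 1 + S := by nlinarith [sq_le_sum_sq v j, sq_abs (v j), abs_nonneg (v j)]
  calc |dGaussian j v| = 2 * π * |v j| * exp (-π * S) := by
        rw [dGaussian, gaussian, abs_mul, abs_mul, abs_of_pos (exp_pos _),
          abs_of_neg (by linarith [pi_pos] : -2 * π < 0)]
        ring
    _ ≤ (2 * π + 2 * π * S) * exp (-π * S) := by gcongr; nlinarith [pi_pos]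
    _ ≤ (2 * π + 2 * (2 * π) / π) * exp (-(π / 2) * S) :=
        add_mul_mul_exp_neg_le (by positivity) (by positivity) pi_pos hS
    _ = (2 * π + 4) * exp (-(π / 2) * S) := by field_simp; ring

lemma hasGaussianDecay_ddGaussian : HasGaussianDecay (ddGaussian j : (ι → ℝ) → ℝ) := by
  refine ⟨10 * π, π / 2, by positivity, fun v => ?_⟩
  set S := ∑ k, v k ^ 2
  have hS : 0 ≤ S := Finset.sum_nonneg fun k _ => sq_nonneg _
  have hpoly : |4 * π ^ 2 * v j ^ 2 - 2 * π| ≤ 2 * π + 4 * π ^ 2 * S := by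
    have := sq_le_sum_sq v j
    rw [abs_le]; constructor <;> nlinarith [pi_pos, sq_nonneg (v j)]
  calc |ddGaussian j v| = |4 * π ^ 2 * v j ^ 2 - 2 * π| * exp (-π * S) := by
        rw [ddGaussian, gaussian, abs_mul, abs_of_pos (exp_pos _)]
    _ ≤ (2 * π + 4 * π ^ 2 * S) * exp (-π * S) := by gcongr
    _ ≤ (2 * π + 2 * (4 * π ^ 2) / π) * exp (-(π / 2) * S) :=
        add_mul_mul_exp_neg_le (by positivity) (by positivity) pi_pos hS
    _ = 10 * π * exp (-(π / 2) * S) := by field_simp; ring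

end Partial

section BoundedFactor

variable {g : (ι → ℝ) → ℝ} {C : ℝ}

theorem hasDerivAt_integral_mul_of_dominated (hg : AEStronglyMeasurable g)
    (hgC : ∀ x, |g x| ≤ C) {F F' : ℝ → (ι → ℝ) → ℝ} {bound : (ι → ℝ) → ℝ} {t₀ ε : ℝ}
    (hε : 0 < ε) (hF : ∀ t, Continuous (F t)) (hF' : Continuous (F' t₀))
    (hF_int : Integrable (F t₀)) (hF'_le : ∀ t ∈ ball t₀ ε, ∀ x, |F' t x| ≤ bound x)
    (hbound : Integrable bound) (hderiv : ∀ t ∈ ball t₀ ε, ∀ x, HasDerivAt (F · x) (F' t x) t) :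
    Integrable (fun x => F' t₀ x * g x) ∧
      HasDerivAt (fun t => ∫ x, F t x * g x) (∫ x, F' t₀ x * g x) t₀ :=
  hasDerivAt_integral_of_dominated_loc_of_deriv_le (ball_mem_nhds t₀ hε)
    (Eventually.of_forall fun t => (hF t).aestronglyMeasurable.mul hg)
    (hF_int.mul_bdd hg (ae_of_all _ hgC)) (hF'.aestronglyMeasurable.mul hg)
    (ae_of_all _ fun x t ht => by
      rw [norm_mul, Real.norm_eq_abs, Real.norm_eq_abs]
      exact mul_le_mul (hF'_le t ht x) (hgC x) (abs_nonneg _)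
        ((abs_nonneg _).trans (hF'_le t ht x)))
    (hbound.mul_const C) (ae_of_all _ fun x t ht => (hderiv t ht x).mul_const (g x))

theorem HasGaussianDecay.integrable_comp_sub_mul {ψ : (ι → ℝ) → ℝ} (hψ : HasGaussianDecay ψ)
    (hψc : Continuous ψ) (hg : AEStronglyMeasurable g) (hgC : ∀ x, |g x| ≤ C) (u : ι → ℝ) :
    Integrable (fun x => ψ (u - x) * g x) :=
  (hψ.integrable_comp_sub hψc u).mul_bdd hg (ae_of_all _ hgC)

lemma sum_sq_update_le [DecidableEq ι] {u : ι → ℝ} {j : ι} {t : ℝ} (ht : t ∈ ball (u j) 1) :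
    ∑ k, Function.update u j t k ^ 2 ≤ ∑ k, (|u k| + 1) ^ 2 := by
  refine Finset.sum_le_sum fun k _ => ?_
  rcases eq_or_ne k j with rfl | hk
  · rw [Function.update_self, ← sq_abs t]
    have : |t| ≤ |u k| + 1 := by
      have := abs_sub_abs_le_abs_sub t (u k)
      rw [mem_ball, Real.dist_eq] at ht
      linarith
    gcongr
  · rw [Function.update_of_ne hk, ← sq_abs (u k)]
    gcongr
    linarith

theorem hasDerivAt_integral_comp_update_sub_mul [DecidableEq ι] (j : ι) {ψ ψ' : (ι → ℝ) → ℝ}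
    (hψ : HasGaussianDecay ψ) (hψc : Continuous ψ) (hψ' : HasGaussianDecay ψ')
    (hψ'c : Continuous ψ')
    (hderiv : ∀ v, HasDerivAt (fun s => ψ (Function.update v j s)) (ψ' v) (v j))
    (hg : AEStronglyMeasurable g) (hgC : ∀ x, |g x| ≤ C) (u : ι → ℝ) :
    HasDerivAt (fun t => ∫ x, ψ (Function.update u j t - x) * g x) (∫ x, ψ' (u - x) * g x)
      (u j) := by
  obtain ⟨bound, hbound, hle⟩ := hψ'.exists_integrable_bound_comp_sub (∑ k, (|u k| + 1) ^ 2)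
  have key := hasDerivAt_integral_mul_of_dominated hg hgC (t₀ := u j)
    (F := fun t x => ψ (Function.update u j t - x))
    (F' := fun t x => ψ' (Function.update u j t - x)) one_pos
    (fun t => hψc.comp (continuous_const.sub continuous_id))
    (hψ'c.comp (continuous_const.sub continuous_id))
    (by simpa using hψ.integrable_comp_sub hψc u)
    (fun t ht x => hle _ (sum_sq_update_le ht) x) hbound
    (fun t _ x => by
      have hupd : ∀ s, Function.update u j s - x = Function.update (u - x) j (s - x j) := by
        intro s; rw [Function.update_sub, Function.update_eq_self]
      simp only [hupd]
      have h := hderiv (Function.update (u - x) j (t - x j))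
      simp only [Function.update_idem, Function.update_self] at h
      exact h.comp_sub_const t (x j))
  simpa using key.2

theorem pderiv_integral_comp_sub_mul [DecidableEq ι] (j : ι) {ψ ψ' : (ι → ℝ) → ℝ}
    (hψ : HasGaussianDecay ψ) (hψc : Continuous ψ) (hψ' : HasGaussianDecay ψ')
    (hψ'c : Continuous ψ')
    (hderiv : ∀ v, HasDerivAt (fun s => ψ (Function.update v j s)) (ψ' v) (v j))
    (hg : AEStronglyMeasurable g) (hgC : ∀ x, |g x| ≤ C) (u : ι → ℝ) :
    pderiv j (fun w => ∫ x, ψ (w - x) * g x) u = ∫ x, ψ' (u - x) * g x :=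
  (hasDerivAt_integral_comp_update_sub_mul j hψ hψc hψ' hψ'c hderiv hg hgC u).deriv

theorem pow_card_mul_integral_gaussian_sub_smul_mul
    (hg_smul : ∀ c : ℝ, 0 < c → ∀ x, g (c • x) = g x) {c : ℝ} (hc : 0 < c) (u : ι → ℝ) :
    c ^ Fintype.card ι * ∫ y, gaussian (u - c • y) * g y = ∫ x, gaussian (u - x) * g x := by
  have h := Measure.integral_comp_smul volume (fun x => gaussian (u - x) * g x) c
  simp only [hg_smul c hc, Module.finrank_fintype_fun_eq_card] at h
  rw [h, smul_eq_mul, abs_of_pos (by positivity), ← mul_assoc, mul_inv_cancel₀ (by positivity),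
    one_mul]

lemma gaussian_sub_smul_le {c : ℝ} (hc : 1 / 2 < c) (u y : ι → ℝ) :
    gaussian (u - c • y) ≤ exp (π * ∑ k, u k ^ 2) * exp (-(π / 8) * ∑ k, y k ^ 2) := by
  refine (exp_neg_mul_sum_sq_sub_le pi_pos.le u (c • y)).trans ?_
  refine mul_le_mul_of_nonneg_left (exp_le_exp.2 ?_) (exp_pos _).le
  simp only [Pi.smul_apply, smul_eq_mul, mul_pow, ← Finset.mul_sum]
  have hS : 0 ≤ ∑ k, y k ^ 2 := Finset.sum_nonneg fun k _ => sq_nonneg _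
  nlinarith [pi_pos, mul_le_mul_of_nonneg_right (by nlinarith : 1 / 4 ≤ c ^ 2) hS]

lemma abs_sum_sub_mul_mul_le {c : ℝ} (hc : c ∈ ball (1 : ℝ) (1 / 2)) (u y : ι → ℝ) :
    |∑ k, (u k - c * y k) * y k| ≤ ∑ k, u k ^ 2 + 2 * ∑ k, y k ^ 2 := by
  rw [mem_ball, Real.dist_eq, abs_lt] at hc
  rw [Finset.mul_sum, ← Finset.sum_add_distrib]
  refine (Finset.abs_sum_le_sum_abs _ _).trans (Finset.sum_le_sum fun k _ => ?_)
  rw [abs_le]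
  constructor <;>
    nlinarith [sq_nonneg (u k + y k), sq_nonneg (u k - y k), sq_nonneg (y k),
      mul_le_mul_of_nonneg_right hc.1.le (sq_nonneg (y k)),
      mul_le_mul_of_nonneg_right hc.2.le (sq_nonneg (y k))]

lemma hasDerivAt_gaussian_sub_smul (u y : ι → ℝ) (c : ℝ) :
    HasDerivAt (fun s => gaussian (u - s • y))
      (2 * π * (∑ k, (u k - c * y k) * y k) * gaussian (u - c • y)) c := by
  refine (((hasDerivAt_id c).smul_const y).const_sub u).gaussian.congr_deriv ?_
  simp only [Pi.sub_apply, Pi.neg_apply, Pi.smul_apply, smul_eq_mul, one_mul, id, mul_neg,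
    Finset.sum_neg_distrib]
  ring

lemma abs_deriv_gaussian_sub_smul_le {c : ℝ} (hc : c ∈ ball (1 : ℝ) (1 / 2)) (u y : ι → ℝ) :
    |2 * π * (∑ k, (u k - c * y k) * y k) * gaussian (u - c • y)| ≤
      2 * π * exp (π * ∑ k, u k ^ 2) *
        ((∑ k, u k ^ 2 + 2 * 2 / (π / 8)) * exp (-(π / 8 / 2) * ∑ k, y k ^ 2)) := by
  have hS : 0 ≤ ∑ k, y k ^ 2 := Finset.sum_nonneg fun k _ => sq_nonneg _
  have hU : 0 ≤ ∑ k, u k ^ 2 := Finset.sum_nonneg fun k _ => sq_nonneg _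
  have hc' : 1 / 2 < c := by rw [mem_ball, Real.dist_eq, abs_lt] at hc; linarith
  calc |2 * π * (∑ k, (u k - c * y k) * y k) * gaussian (u - c • y)|
      = 2 * π * |∑ k, (u k - c * y k) * y k| * gaussian (u - c • y) := by
        rw [abs_mul, abs_mul, abs_of_pos (by positivity : (0 : ℝ) < 2 * π),
          abs_of_pos (gaussian_pos _)]
    _ ≤ 2 * π * (∑ k, u k ^ 2 + 2 * ∑ k, y k ^ 2) *
          (exp (π * ∑ k, u k ^ 2) * exp (-(π / 8) * ∑ k, y k ^ 2)) := by
        refine mul_le_mul (mul_le_mul_of_nonneg_left (abs_sum_sub_mul_mul_le hc u y)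
          (by positivity)) (gaussian_sub_smul_le hc' u y) (gaussian_pos _).le (by positivity)
    _ = 2 * π * exp (π * ∑ k, u k ^ 2) *
          ((∑ k, u k ^ 2 + 2 * ∑ k, y k ^ 2) * exp (-(π / 8) * ∑ k, y k ^ 2)) := by ring
    _ ≤ _ := mul_le_mul_of_nonneg_left
        (add_mul_mul_exp_neg_le hU zero_le_two (by positivity : (0 : ℝ) < π / 8) hS)
        (by positivity)

theorem integral_euler_mul_gaussian_mul_eq_zero (hg : AEStronglyMeasurable g)
    (hgC : ∀ x, |g x| ≤ C) (hg_smul : ∀ c : ℝ, 0 < c → ∀ x, g (c • x) = g x) (u : ι → ℝ) :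
    ∫ y, ((Fintype.card ι : ℝ) + 2 * π * ∑ k, (u k - y k) * y k) * gaussian (u - y) * g y
      = 0 := by
  obtain ⟨hint, hderiv⟩ := hasDerivAt_integral_mul_of_dominated hg hgC (t₀ := 1) (ε := 1 / 2)
    (F := fun c y => gaussian (u - c • y))
    (F' := fun c y => 2 * π * (∑ k, (u k - c * y k) * y k) * gaussian (u - c • y))
    (by norm_num) (fun c => by fun_prop) (by fun_prop)
    (by simpa using hasGaussianDecay_gaussian.integrable_comp_sub continuous_gaussian u)
    (fun c hc y => abs_deriv_gaussian_sub_smul_le hc u y)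
    (((integrable_exp_neg_mul_sum_sq (by positivity)).const_mul _).const_mul _)
    (fun c _ y => hasDerivAt_gaussian_sub_smul u y c)
  simp only [one_mul, one_smul] at hint hderiv
  have hconst : (fun c : ℝ => c ^ Fintype.card ι * ∫ y, gaussian (u - c • y) * g y)
      =ᶠ[𝓝 1] fun _ => ∫ x, gaussian (u - x) * g x :=
    (eventually_gt_nhds one_pos).mono fun c hc =>
      pow_card_mul_integral_gaussian_sub_smul_mul hg_smul hc u
  have h0 := ((hasDerivAt_pow _ 1).mul hderiv).unique
    ((hasDerivAt_const (1 : ℝ) _).congr_of_eventuallyEq hconst)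
  simp only [one_pow, mul_one, one_mul, one_smul] at h0
  rw [← h0, ← integral_const_mul, ← integral_add ((hasGaussianDecay_gaussian.integrable_comp_sub_mul
    continuous_gaussian hg hgC u).const_mul _) hint]
  congr 1 with y
  ring

noncomputable def gaussConv (g : (ι → ℝ) → ℝ) (u : ι → ℝ) : ℝ := ∫ x, gaussian (u - x) * g x

lemma sum_ddGaussian_add_mul_dGaussian (u x : ι → ℝ) :
    ∑ j, (ddGaussian j (u - x) + 2 * π * u j * dGaussian j (u - x)) =
      -2 * π * (((Fintype.card ι : ℝ) + 2 * π * ∑ k, (u k - x k) * x k) * gaussian (u - x)) := by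
  calc ∑ j, (ddGaussian j (u - x) + 2 * π * u j * dGaussian j (u - x))
      = ∑ j, (-2 * π * gaussian (u - x) + -4 * π ^ 2 * gaussian (u - x) * ((u j - x j) * x j)) :=
        Finset.sum_congr rfl fun j _ => by simp only [ddGaussian, dGaussian, Pi.sub_apply]; ring
    _ = _ := by
        rw [Finset.sum_add_distrib, Finset.sum_const, Finset.card_univ, nsmul_eq_mul,
          ← Finset.mul_sum]
        ring

variable [DecidableEq ι]

theorem pderiv_gaussConv (hg : AEStronglyMeasurable g) (hgC : ∀ x, |g x| ≤ C) (j : ι) :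
    pderiv j (gaussConv g) = fun u => ∫ x, dGaussian j (u - x) * g x :=
  funext <| pderiv_integral_comp_sub_mul j hasGaussianDecay_gaussian continuous_gaussian
    (hasGaussianDecay_dGaussian j) (continuous_dGaussian j) (hasDerivAt_gaussian_update j) hg hgC

theorem pderiv_pderiv_gaussConv (hg : AEStronglyMeasurable g) (hgC : ∀ x, |g x| ≤ C) (j : ι)
    (u : ι → ℝ) : pderiv j (pderiv j (gaussConv g)) u = ∫ x, ddGaussian j (u - x) * g x := by
  rw [pderiv_gaussConv hg hgC]
  exact pderiv_integral_comp_sub_mul j (hasGaussianDecay_dGaussian j) (continuous_dGaussian j)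
    (hasGaussianDecay_ddGaussian j) (continuous_ddGaussian j) (hasDerivAt_dGaussian_update j)
    hg hgC u

theorem gaussConv_vigneras_eq_zero (hg : AEStronglyMeasurable g) (hgC : ∀ x, |g x| ≤ C)
    (hg_smul : ∀ c : ℝ, 0 < c → ∀ x, g (c • x) = g x) (u : ι → ℝ) :
    ∑ j, (pderiv j (pderiv j (gaussConv g)) u + 2 * π * u j * pderiv j (gaussConv g) u) = 0 := by
  have hint := fun {ψ : (ι → ℝ) → ℝ} (hψ : HasGaussianDecay ψ) (hψc : Continuous ψ) =>
    hψ.integrable_comp_sub_mul hψc hg hgC u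
  calc ∑ j, (pderiv j (pderiv j (gaussConv g)) u + 2 * π * u j * pderiv j (gaussConv g) u)
      = ∑ j, ∫ x, (ddGaussian j (u - x) + 2 * π * u j * dGaussian j (u - x)) * g x := by
        refine Finset.sum_congr rfl fun j _ => ?_
        have h := integral_add (hint (hasGaussianDecay_ddGaussian j) (continuous_ddGaussian j))
          ((hint (hasGaussianDecay_dGaussian j) (continuous_dGaussian j)).const_mul
            (2 * π * u j))
        rw [integral_const_mul] at h
        rw [pderiv_pderiv_gaussConv hg hgC, pderiv_gaussConv hg hgC, ← h]
        congr 1 with x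
        ring
    _ = ∫ x, ∑ j, (ddGaussian j (u - x) + 2 * π * u j * dGaussian j (u - x)) * g x :=
        (integral_finsetSum _ fun j _ =>
          ((hint (hasGaussianDecay_ddGaussian j) (continuous_ddGaussian j)).add
            ((hint (hasGaussianDecay_dGaussian j) (continuous_dGaussian j)).const_mul
              (2 * π * u j))).congr
            (ae_of_all _ fun x => by simp only [Pi.add_apply]; ring)).symm
    _ = -2 * π * ∫ x, ((Fintype.card ι : ℝ) + 2 * π * ∑ k, (u k - x k) * x k) *
          gaussian (u - x) * g x := by
        rw [← integral_const_mul]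
        congr 1 with x
        rw [← Finset.sum_mul, sum_ddGaussian_add_mul_dGaussian]
        ring
    _ = 0 := by rw [integral_euler_mul_gaussian_mul_eq_zero hg hgC hg_smul, mul_zero]

end BoundedFactor

lemma Real.measurable_sign : Measurable Real.sign :=
  Measurable.ite measurableSet_Iio measurable_const
    (Measurable.ite measurableSet_Ioi measurable_const measurable_const)

lemma Real.abs_sign_le_one (r : ℝ) : |Real.sign r| ≤ 1 := by
  rcases Real.sign_apply_eq r with h | h | h <;> simp [h]

lemma Real.sign_mul_of_pos {c : ℝ} (hc : 0 < c) (r : ℝ) : Real.sign (c * r) = Real.sign r := by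
  rcases lt_trichotomy r 0 with hr | rfl | hr
  · rw [Real.sign_of_neg hr, Real.sign_of_neg (mul_neg_of_pos_of_neg hc hr)]
  · rw [mul_zero]
  · rw [Real.sign_of_pos hr, Real.sign_of_pos (mul_pos hc hr)]

noncomputable def signProd (M : Matrix ι ι ℝ) (x : ι → ℝ) : ℝ := ∏ j, Real.sign ((Mᵀ *ᵥ x) j)

lemma measurable_signProd (M : Matrix ι ι ℝ) : Measurable (signProd M) :=
  Finset.measurable_prod _ fun _ _ =>
    Real.measurable_sign.comp ((Mᵀ.mulVecLin.continuous_of_finiteDimensional.measurable).eval)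

lemma abs_signProd_le_one (M : Matrix ι ι ℝ) (x : ι → ℝ) : |signProd M x| ≤ 1 := by
  rw [signProd, Finset.abs_prod]
  exact Finset.prod_le_one (fun _ _ => abs_nonneg _) fun _ _ => Real.abs_sign_le_one _

lemma signProd_smul (M : Matrix ι ι ℝ) {c : ℝ} (hc : 0 < c) (x : ι → ℝ) :
    signProd M (c • x) = signProd M x := by
  simp only [signProd, mulVec_smul, Pi.smul_apply, smul_eq_mul, Real.sign_mul_of_pos hc]

lemma Efun_eq_gaussConv (M : Matrix ι ι ℝ) : Efun M = gaussConv (signProd M) := rfl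

theorem stmt_12_general {r : ℕ} (M : Matrix (Fin r) (Fin r) ℝ)
    (u : Fin r → ℝ) :
    ∑ j, (pderiv j (pderiv j (Efun M)) u + 2 * Real.pi * u j * pderiv j (Efun M) u)
      = 0 := by
  rw [Efun_eq_gaussConv]
  exact gaussConv_vigneras_eq_zero (measurable_signProd M).aestronglyMeasurable
    (abs_signProd_le_one M) (fun c hc => signProd_smul M hc) u

/-- `E_r` satisfies the Vignéras equation with `λ = 0`:
`∑ⱼ (∂²ⱼ + 2π uⱼ ∂ⱼ) E_r(𝓜; u) = 0`. -/
theorem stmt_12 {r : ℕ} (M : Matrix (Fin r) (Fin r) ℝ) (hM : IsUnit M.det)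
    (u : Fin r → ℝ) :
    ∑ j, (pderiv j (pderiv j (Efun M)) u + 2 * Real.pi * u j * pderiv j (Efun M) u)
      = 0 :=
  stmt_12_general M u
end

section
/- Let A be a real symmetric n×n bilinear form of signature (r, n-r), let c₁, c'₁, …, c_r, c'_r ∈ ℝ^n, and for vectors x ∈ ℝ^n write X = (B(c₁,x), B(c'₁,x), …, B(c_r,x), B(c'_r,x))ᵀ, where B(x,y) = xᵀAy. Let Δ be the Gram determinant of (c₁,c'₁,…,c_r,c'_r) with respect to B, and assume Δ ≠ 0. Let D_{j,j'} be the cofactor at position (2j-1, 2j), and let M be the matrix obtained from the cofactor matrix by deleting the entries D_{j,j'} and D_{j',j} (setting them to zero). Then for every x ∈ ℝ^n: Δ(x, c₁, c'₁, …, c_r, c'_r) = Δ·[Q(x) - 2(∑_{j=1}^r D_{j,j'} B(c_j,x) B(c'_j,x))/Δ] - XᵀMX, where Δ(x, c₁, …, c'_r) is the Gram determinant of the (2r+1)-tuple and Q(x) = B(x,x). -/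
open Matrix

/-- Bilinear pairing `B(x,y) = xᵀAy`. -/
def bil {n : ℕ} (A : Matrix (Fin n) (Fin n) ℝ) (x y : Fin n → ℝ) : ℝ :=
  x ⬝ᵥ A.mulVec y

/-- Gram matrix of a family of vectors with respect to `B`. -/
def gramMat {n : ℕ} {ι : Type*} (A : Matrix (Fin n) (Fin n) ℝ)
    (t : ι → Fin n → ℝ) : Matrix ι ι ℝ :=
  Matrix.of fun a b => bil A (t a) (t b)

/-- Cofactor of a square matrix at position `(a, b)` (the `(b, a)` entry of
the adjugate). -/
def cof {ι : Type*} [Fintype ι] [DecidableEq ι] (G : Matrix ι ι ℝ) (a b : ι) : ℝ :=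
  G.adjugate b a

lemma bil_comm {n : ℕ} {A : Matrix (Fin n) (Fin n) ℝ} (hA : A.IsSymm)
    (x y : Fin n → ℝ) : bil A x y = bil A y x := by
  unfold bil
  rw [Matrix.dotProduct_mulVec, ← Matrix.mulVec_transpose, hA.eq, dotProduct_comm]

/-- The cofactor expansion identity
`Δ(x,c₁,c'₁,…,c_r,c'_r) = Δ·[Q(x) - 2(∑ⱼ D_{j,j'}B(cⱼ,x)B(c'ⱼ,x))/Δ] - XᵀMX`
for a symmetric bilinear form of signature `(r, n-r)` with `Δ ≠ 0`. -/
theorem stmt_16 {n r : ℕ} (A : Matrix (Fin n) (Fin n) ℝ) (hA : A.IsSymm)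
    (hsig : ∃ Pm : Matrix (Fin n) (Fin n) ℝ, IsUnit Pm.det ∧
      Pmᵀ * A * Pm = Matrix.diagonal (fun i : Fin n => if (i : ℕ) < r then (1:ℝ) else -1))
    (c c' : Fin r → Fin n → ℝ) (x : Fin n → ℝ) :
    letI t : Fin r × Bool → Fin n → ℝ := fun p => if p.2 then c' p.1 else c p.1
    letI G : Matrix (Fin r × Bool) (Fin r × Bool) ℝ := gramMat A t
    letI Δ : ℝ := G.det
    letI D : Fin r → ℝ := fun j => cof G (j, false) (j, true)
    letI Mmat : Matrix (Fin r × Bool) (Fin r × Bool) ℝ :=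
      Matrix.of fun a b => if a.1 = b.1 ∧ a.2 ≠ b.2 then 0 else cof G a b
    letI X : Fin r × Bool → ℝ := fun a => bil A (t a) x
    Δ ≠ 0 →
      (gramMat A (fun o : Option (Fin r × Bool) => o.elim x t)).det =
        Δ * (bil A x x - 2 * (∑ j, D j * bil A (c j) x * bil A (c' j) x) / Δ)
          - X ⬝ᵥ Mmat.mulVec X := by
  intro hΔ
  set t : Fin r × Bool → Fin n → ℝ := fun p => if p.2 then c' p.1 else c p.1 with ht
  set G : Matrix (Fin r × Bool) (Fin r × Bool) ℝ := gramMat A t with hG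
  set X : Fin r × Bool → ℝ := fun a => bil A (t a) x with hX
  have hGsymm : Gᵀ = G := by
    ext a b
    simp only [Matrix.transpose_apply, G, gramMat, Matrix.of_apply]
    exact bil_comm hA _ _
  have hadj : ∀ a b, G.adjugate a b = G.adjugate b a := by
    intro a b
    conv_lhs => rw [← hGsymm, ← Matrix.adjugate_transpose]
    rfl
  have hunit : IsUnit G.det := isUnit_iff_ne_zero.mpr hΔ
  haveI : Invertible G := G.invertibleOfIsUnitDet hunit
  set e : Option (Fin r × Bool) ≃ (Fin r × Bool) ⊕ Unit :=
    Equiv.optionEquivSumPUnit _ with he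
  have hblock : gramMat A (fun o : Option (Fin r × Bool) => o.elim x t) =
      (Matrix.fromBlocks G (Matrix.of fun a (_ : Unit) => X a)
        (Matrix.of fun (_ : Unit) b => X b)
        (Matrix.of fun (_ : Unit) (_ : Unit) => bil A x x)).submatrix e e := by
    ext a b
    cases a <;> cases b <;>
      simp [gramMat, Matrix.fromBlocks, e, X, G, bil_comm hA x]
  have key : (gramMat A (fun o : Option (Fin r × Bool) => o.elim x t)).det =
      G.det * (bil A x x - X ⬝ᵥ G⁻¹.mulVec X) := by
    rw [hblock, Matrix.det_submatrix_equiv_self, Matrix.det_fromBlocks₁₁]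
    congr 1
    rw [Matrix.det_unique]
    simp only [Matrix.sub_apply, Matrix.of_apply, Matrix.mul_apply, Matrix.mulVec,
      dotProduct]
    congr 1
    simp only [Matrix.invOf_eq_nonsing_inv, Finset.sum_mul, Finset.mul_sum]
    rw [Finset.sum_comm]
    apply Finset.sum_congr rfl
    intro a _
    apply Finset.sum_congr rfl
    intro b _
    ring
  have hadjdet : G.adjugate = G.det • G⁻¹ := by
    calc G.adjugate = (G⁻¹ * G) * G.adjugate := by
          rw [Matrix.nonsing_inv_mul G hunit, Matrix.one_mul]
      _ = G⁻¹ * (G * G.adjugate) := by rw [Matrix.mul_assoc]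
      _ = G.det • G⁻¹ := by rw [Matrix.mul_adjugate, Matrix.mul_smul, Matrix.mul_one]
  have hadjX : X ⬝ᵥ G.adjugate.mulVec X = G.det * (X ⬝ᵥ G⁻¹.mulVec X) := by
    rw [hadjdet, Matrix.smul_mulVec, dotProduct_smul, smul_eq_mul]
  have hME : G.adjugate =
      (Matrix.of fun a b => if a.1 = b.1 ∧ a.2 ≠ b.2 then 0 else cof G a b) +
        (Matrix.of fun a b => if a.1 = b.1 ∧ a.2 ≠ b.2 then G.adjugate a b else 0) := by
    ext a b
    by_cases h : a.1 = b.1 ∧ a.2 ≠ b.2 <;> simp [h, cof, hadj a b]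
  have hE : X ⬝ᵥ (Matrix.of fun a b =>
        if a.1 = b.1 ∧ a.2 ≠ b.2 then G.adjugate a b else 0).mulVec X =
      2 * ∑ j, cof G (j, false) (j, true) * bil A (c j) x * bil A (c' j) x := by
    simp only [dotProduct, Matrix.mulVec, Matrix.of_apply]
    simp only [Fintype.sum_prod_type, Fintype.sum_bool, ne_eq, and_false, and_true,
      Bool.true_eq_false, Bool.false_eq_true, not_true_eq_false, not_false_eq_true,
      if_false, if_true, Finset.sum_ite_eq, Finset.mem_univ, if_pos, mul_zero,
      zero_mul, add_zero, zero_add, Finset.sum_const_zero, Finset.mul_sum]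
    apply Finset.sum_congr rfl
    intro j _
    have hx1 : X (j, true) = bil A (c' j) x := by simp [hX, ht]
    have hx2 : X (j, false) = bil A (c j) x := by simp [hX, ht]
    simp only [mul_ite, ite_mul, mul_zero, zero_mul, Finset.sum_ite_eq, Finset.mem_univ,
      if_true, hx1, hx2, cof]
    rw [hadj (j, true) (j, false)]
    ring
  rw [key, mul_sub, ← hadjX, hME, Matrix.add_mulVec, dotProduct_add, hE]
  field_simp
  ring
end

section
/- Under the hypotheses (-1)^r Δ > 0, (-1)^r D_{j,j'} ≥ 0 for all j, and (-1)^r M negative definite, and for x in the support of φ_r(x) = 2^{-r} ∏_j [sign(B(c_j,x)) - sign(B(c'_j,x))] (i.e., B(c_j,x)B(c'_j,x) ≤ 0 for all j), one has Q₋(x) ≥ Q(x); consequently |φ_r(x)| e^{πQ(x)/2} ≤ e^{πQ₋(x)/2} on the support, where Q₋ is negative definite. -/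
open Matrix

lemma aux_stmt18 {r : ℕ} (Δ : ℝ) (D a b : Fin r → ℝ) (Qx : ℝ)
    (hΔ : (-1 : ℝ) ^ r * Δ > 0) (hD : ∀ j, (-1 : ℝ) ^ r * D j ≥ 0)
    (hsupp : ∀ j, a j * b j ≤ 0) :
    Qx ≤ Qx - 2 * (∑ j, D j * a j * b j) / Δ ∧
      |(2 : ℝ)⁻¹ ^ r * ∏ j, (Real.sign (a j) - Real.sign (b j))| *
          Real.exp (Real.pi * Qx / 2) ≤
        Real.exp (Real.pi * (Qx - 2 * (∑ j, D j * a j * b j) / Δ) / 2) := by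
  have hnum : (-1:ℝ)^r * (∑ j, D j * a j * b j) ≤ 0 := by
    rw [Finset.mul_sum]
    apply Finset.sum_nonpos
    intro j _
    have h : (-1:ℝ)^r * (D j * a j * b j) = ((-1:ℝ)^r * D j) * (a j * b j) := by ring
    rw [h]
    exact mul_nonpos_of_nonneg_of_nonpos (hD j) (hsupp j)
  have hΔne : ((-1:ℝ)^r) ≠ 0 := by positivity
  have hdiv : (∑ j, D j * a j * b j) / Δ ≤ 0 := by
    have h : (∑ j, D j * a j * b j) / Δ
        = ((-1:ℝ)^r * (∑ j, D j * a j * b j)) / ((-1:ℝ)^r * Δ) :=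
      (mul_div_mul_left _ _ hΔne).symm
    rw [h]
    exact div_nonpos_of_nonpos_of_nonneg hnum hΔ.le
  have hQ : Qx ≤ Qx - 2 * (∑ j, D j * a j * b j) / Δ := by
    have h : Qx - 2 * (∑ j, D j * a j * b j) / Δ
        = Qx - 2 * ((∑ j, D j * a j * b j) / Δ) := by ring
    rw [h]; nlinarith [hdiv]
  refine ⟨hQ, ?_⟩
  have hφ : |(2 : ℝ)⁻¹ ^ r * ∏ j, (Real.sign (a j) - Real.sign (b j))| ≤ 1 := by
    rw [abs_mul, abs_pow, Finset.abs_prod]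
    have h2 : |(2:ℝ)⁻¹| = (2:ℝ)⁻¹ := by norm_num
    rw [h2]
    have h1 : ∀ y : ℝ, |Real.sign y| ≤ 1 := by
      intro y; unfold Real.sign; split_ifs <;> norm_num
    have hb : ∀ j : Fin r, |Real.sign (a j) - Real.sign (b j)| ≤ 2 := by
      intro j
      calc |Real.sign (a j) - Real.sign (b j)|
          ≤ |Real.sign (a j)| + |Real.sign (b j)| := abs_sub _ _
        _ ≤ 2 := by linarith [h1 (a j), h1 (b j)]
    calc (2:ℝ)⁻¹ ^ r * ∏ j, |Real.sign (a j) - Real.sign (b j)|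
        ≤ (2:ℝ)⁻¹ ^ r * ∏ _j : Fin r, (2:ℝ) := by
          apply mul_le_mul_of_nonneg_left
            (Finset.prod_le_prod (fun j _ => abs_nonneg _) (fun j _ => hb j))
          positivity
      _ = 1 := by
          rw [Finset.prod_const]
          simp [← mul_pow]
  calc |(2 : ℝ)⁻¹ ^ r * ∏ j, (Real.sign (a j) - Real.sign (b j))| *
        Real.exp (Real.pi * Qx / 2)
      ≤ 1 * Real.exp (Real.pi * Qx / 2) :=
        mul_le_mul_of_nonneg_right hφ (Real.exp_nonneg _)
    _ = Real.exp (Real.pi * Qx / 2) := one_mul _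
    _ ≤ Real.exp (Real.pi * (Qx - 2 * (∑ j, D j * a j * b j) / Δ) / 2) := by
        apply Real.exp_le_exp.2
        have := Real.pi_pos
        nlinarith

/-- On the support of `φ_r` (where `B(cⱼ,x)B(c'ⱼ,x) ≤ 0` for all `j`), under
`(-1)^r Δ > 0`, `(-1)^r D_{j,j'} ≥ 0` and `(-1)^r M` negative definite, one has
`Q₋(x) ≥ Q(x)` and the Gaussian domination
`|φ_r(x)| e^{πQ(x)/2} ≤ e^{πQ₋(x)/2}`. -/
theorem stmt_18 {n r : ℕ} (A : Matrix (Fin n) (Fin n) ℝ) (hA : A.IsSymm)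
    (hsig : ∃ Pm : Matrix (Fin n) (Fin n) ℝ, IsUnit Pm.det ∧
      Pmᵀ * A * Pm = Matrix.diagonal (fun i : Fin n => if (i : ℕ) < r then (1:ℝ) else -1))
    (c c' : Fin r → Fin n → ℝ) (x : Fin n → ℝ) :
    letI t : Fin r × Bool → Fin n → ℝ := fun p => if p.2 then c' p.1 else c p.1
    letI G : Matrix (Fin r × Bool) (Fin r × Bool) ℝ := gramMat A t
    letI Δ : ℝ := G.det
    letI D : Fin r → ℝ := fun j => cof G (j, false) (j, true)
    letI Mmat : Matrix (Fin r × Bool) (Fin r × Bool) ℝ :=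
      Matrix.of fun a b => if a.1 = b.1 ∧ a.2 ≠ b.2 then 0 else cof G a b
    letI Qx : ℝ := bil A x x
    letI Qminus : ℝ := Qx - 2 * (∑ j, D j * bil A (c j) x * bil A (c' j) x) / Δ
    letI φ : ℝ := (2 : ℝ)⁻¹ ^ r *
      ∏ j, (Real.sign (bil A (c j) x) - Real.sign (bil A (c' j) x))
    (-1 : ℝ) ^ r * Δ > 0 → (∀ j, (-1 : ℝ) ^ r * D j ≥ 0) →
      ((-1 : ℝ) ^ (r + 1) • Mmat).PosDef →
      (∀ j, bil A (c j) x * bil A (c' j) x ≤ 0) →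
      Qx ≤ Qminus ∧
        |φ| * Real.exp (Real.pi * Qx / 2) ≤ Real.exp (Real.pi * Qminus / 2) := by
  intro hΔ hD _ hsupp
  exact aux_stmt18 _ _ (fun j => bil A (c j) x) (fun j => bil A (c' j) x) _ hΔ hD hsupp
end

section
/- Let 𝓜 = (m^{(1)} … m^{(r)}) be nonsingular and suppose |M_{r-1}(N; v)| ≤ (r-1)! e^{-π vᵀv} for all admissible (r-1)-dimensional data. Given the identity M_r(𝓜; u) = 2∑_{j=1}^r (m^{(j)T}u/‖m^{(j)}‖) ∫_1^∞ e^{-π t² (m^{(j)T}u)²/‖m^{(j)}‖²} M_{r-1}(P_j 𝓜_{[r]\{j}}; t P_j u) dt, it follows that |M_r(𝓜; u)| ≤ r! e^{-π uᵀu}, using |Q_{{j}}u| ≤ ‖u‖ and erfc(√(π uᵀu)) ≤ e^{-π uᵀu}. -/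
/-!
Write `qⱼ = m⁽ʲ⁾ᵀu / ‖m⁽ʲ⁾‖`. Since `Pⱼ` projects onto the hyperplane orthogonal to `m⁽ʲ⁾`,
`‖Pⱼu‖² = ‖u‖² - qⱼ²`, so the Gaussian weight `e^{-πt²qⱼ²}` and the bound
`(r-1)! e^{-πt²‖Pⱼu‖²}` on `M_{r-1}` combine into `(r-1)! e^{-πt²‖u‖²}`. The Gaussian tail
satisfies `∫₁^∞ e^{-bt²} dt ≤ e^{-b} √(π/b) / 2`, and with `b = π‖u‖²` and `|qⱼ| ≤ ‖u‖` each of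
the `r` summands is at most `(r-1)! e^{-π‖u‖²} / 2`.
-/

open MeasureTheory Matrix Real

theorem setIntegral_Ioi_comp_sub_self (g : ℝ → ℝ) (c : ℝ) :
    ∫ t in Set.Ioi c, g (t - c) = ∫ t in Set.Ioi (0 : ℝ), g t := by
  have := (measurePreserving_sub_right volume c).setIntegral_preimage_emb
    (measurableEmbedding_subRight c) g (Set.Ioi 0)
  rwa [Set.preimage_sub_const_Ioi, zero_add] at this

theorem integral_Ioi_one_exp_neg_mul_sq_le {b : ℝ} (hb : 0 < b) :
    ∫ t in Set.Ioi (1 : ℝ), exp (-b * t ^ 2) ≤ exp (-b) * (√(π / b) / 2) := by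
  -- `t ^ 2 ≥ 1 + (t - 1) ^ 2` for `t ≥ 1` compares the tail with a shifted half Gaussian.
  have hshift : ∀ t ∈ Set.Ioi (1 : ℝ), exp (-b * t ^ 2) ≤ exp (-b) * exp (-b * (t - 1) ^ 2) := by
    intro t (ht : 1 < t)
    rw [← exp_add]
    gcongr
    nlinarith
  calc ∫ t in Set.Ioi (1 : ℝ), exp (-b * t ^ 2)
      ≤ ∫ t in Set.Ioi (1 : ℝ), exp (-b) * exp (-b * (t - 1) ^ 2) :=
        setIntegral_mono_on (integrable_exp_neg_mul_sq hb).integrableOn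
          (((integrable_exp_neg_mul_sq hb).comp_sub_right 1).const_mul _).integrableOn
          measurableSet_Ioi hshift
    _ = exp (-b) * (√(π / b) / 2) := by
        rw [integral_const_mul, setIntegral_Ioi_comp_sub_self (fun t => exp (-b * t ^ 2)) 1,
          integral_gaussian_Ioi]

theorem sqrt_mul_integral_Ioi_one_exp_neg_pi_mul_sq_le {a : ℝ} (ha : 0 < a) :
    √a * ∫ t in Set.Ioi (1 : ℝ), exp (-(π * a) * t ^ 2) ≤ exp (-π * a) / 2 := by
  have hb : 0 < π * a := by positivity
  calc √a * ∫ t in Set.Ioi (1 : ℝ), exp (-(π * a) * t ^ 2)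
      ≤ √a * (exp (-(π * a)) * (√(π / (π * a)) / 2)) := by
        gcongr; exact integral_Ioi_one_exp_neg_mul_sq_le hb
    _ = exp (-π * a) / 2 := by
        rw [div_mul_cancel_left₀ pi_ne_zero, sqrt_inv, neg_mul]
        field_simp

theorem abs_mul_integral_Ioi_one_le {f : ℝ → ℝ} {q a K : ℝ} (hqa : q ^ 2 ≤ a)
    (hf : ∀ t, |f t| ≤ K * exp (-π * (t ^ 2 * (a - q ^ 2)))) :
    |q * ∫ t in Set.Ioi (1 : ℝ), exp (-π * t ^ 2 * q ^ 2) * f t| ≤ K * exp (-π * a) / 2 := by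
  have hK : 0 ≤ K := nonneg_of_mul_nonneg_left ((abs_nonneg _).trans (hf 0)) (exp_pos _)
  rcases eq_or_ne q 0 with rfl | hq
  · simp only [zero_mul, abs_zero]; positivity
  have ha : 0 < a := (pow_pos (abs_pos.2 hq) 2).trans_le (by rwa [sq_abs])
  have hdom : ∀ t, ‖exp (-π * t ^ 2 * q ^ 2) * f t‖ ≤ K * exp (-(π * a) * t ^ 2) := by
    intro t
    rw [norm_mul, norm_of_nonneg (exp_pos _).le, Real.norm_eq_abs]
    calc exp (-π * t ^ 2 * q ^ 2) * |f t|
        ≤ exp (-π * t ^ 2 * q ^ 2) * (K * exp (-π * (t ^ 2 * (a - q ^ 2)))) := by gcongr; exact hf t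
      _ = K * exp (-(π * a) * t ^ 2) := by rw [mul_left_comm, ← exp_add]; ring_nf
  have hint : |∫ t in Set.Ioi (1 : ℝ), exp (-π * t ^ 2 * q ^ 2) * f t|
      ≤ K * ∫ t in Set.Ioi (1 : ℝ), exp (-(π * a) * t ^ 2) := by
    rw [← integral_const_mul, ← Real.norm_eq_abs]
    exact norm_integral_le_of_norm_le
      (((integrable_exp_neg_mul_sq (by positivity)).const_mul K).integrableOn)
      (Filter.Eventually.of_forall hdom)
  calc |q * ∫ t in Set.Ioi (1 : ℝ), exp (-π * t ^ 2 * q ^ 2) * f t|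
      ≤ √a * (K * ∫ t in Set.Ioi (1 : ℝ), exp (-(π * a) * t ^ 2)) := by
        rw [abs_mul]
        exact mul_le_mul (abs_le_sqrt hqa) hint (abs_nonneg _) (sqrt_nonneg _)
    _ ≤ K * exp (-π * a) / 2 := by
        rw [mul_left_comm, mul_div_assoc]
        gcongr
        exact sqrt_mul_integral_Ioi_one_exp_neg_pi_mul_sq_le ha

theorem sum_sq_mulVec_of_transpose_mul_self_eq {ι κ : Type*} [Fintype ι] [Fintype κ]
    [DecidableEq ι] (P : Matrix κ ι ℝ) (m u : ι → ℝ)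
    (hP : Pᵀ * P = 1 - Matrix.of (fun a b => m a * m b / ∑ i, m i ^ 2)) :
    ∑ k, (P *ᵥ u) k ^ 2 = ∑ i, u i ^ 2 - (∑ i, m i * u i) ^ 2 / ∑ i, m i ^ 2 := by
  have hquad : ∑ k, (P *ᵥ u) k ^ 2 = u ⬝ᵥ ((Pᵀ * P) *ᵥ u) := by
    rw [← mulVec_mulVec, dotProduct_mulVec, vecMul_transpose]
    simp only [dotProduct, sq]
  rw [hquad, hP, sub_mulVec, one_mulVec, dotProduct_sub]
  congr 1
  · simp only [dotProduct, sq]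
  · simp only [dotProduct, mulVec, of_apply, sq, Finset.sum_div, Finset.mul_sum, Finset.sum_mul]
    rw [Finset.sum_comm]
    refine Finset.sum_congr rfl fun a _ => Finset.sum_congr rfl fun b _ => ?_
    ring

theorem stmt_19_general {n : ℕ} (M : Matrix (Fin (n + 1)) (Fin (n + 1)) ℝ)
    (u : Fin (n + 1) → ℝ)
    (P : Fin (n + 1) → Matrix (Fin n) (Fin (n + 1)) ℝ)
    (hPproj : ∀ j, (P j)ᵀ * P j =
      1 - Matrix.of (fun a b => M a j * M b j / (∑ i, M i j ^ 2)))
    (Mr : ℝ) (Mprev : Fin (n + 1) → ℝ → ℝ)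
    (hbound : ∀ j t, |Mprev j t| ≤
      (Nat.factorial n : ℝ) * Real.exp (-Real.pi * ∑ i, (t * (P j).mulVec u i) ^ 2))
    (hidentity : Mr = 2 * ∑ j, ((∑ i, M i j * u i) / Real.sqrt (∑ i, M i j ^ 2)) *
      ∫ t in Set.Ioi (1 : ℝ),
        Real.exp (-Real.pi * t ^ 2 * (∑ i, M i j * u i) ^ 2 / (∑ i, M i j ^ 2)) *
          Mprev j t) :
    |Mr| ≤ (Nat.factorial (n + 1) : ℝ) * Real.exp (-Real.pi * ∑ i, u i ^ 2) := by
  have hterm : ∀ j, |((∑ i, M i j * u i) / √(∑ i, M i j ^ 2)) *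
      ∫ t in Set.Ioi (1 : ℝ),
        exp (-π * t ^ 2 * (∑ i, M i j * u i) ^ 2 / (∑ i, M i j ^ 2)) * Mprev j t|
      ≤ (n.factorial : ℝ) * exp (-π * ∑ i, u i ^ 2) / 2 := by
    intro j
    set c := ∑ i, M i j * u i
    set s := ∑ i, M i j ^ 2
    have hq : (c / √s) ^ 2 = c ^ 2 / s := by
      rw [div_pow, sq_sqrt (Finset.sum_nonneg fun i _ => sq_nonneg _)]
    have hPu : ∑ k, (P j *ᵥ u) k ^ 2 = ∑ i, u i ^ 2 - (c / √s) ^ 2 := by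
      rw [hq]
      exact sum_sq_mulVec_of_transpose_mul_self_eq (P j) (fun i => M i j) u (hPproj j)
    have hexp : ∀ t : ℝ, -π * t ^ 2 * c ^ 2 / s = -π * t ^ 2 * (c / √s) ^ 2 := fun t => by
      rw [hq, mul_div_assoc]
    simp_rw [hexp]
    refine abs_mul_integral_Ioi_one_le ?_ fun t => ?_
    · rw [← sub_nonneg, ← hPu]
      exact Finset.sum_nonneg fun k _ => sq_nonneg _
    · simpa only [← hPu, mul_pow, ← Finset.mul_sum] using hbound j t
  rw [hidentity, abs_mul, abs_two]
  calc 2 * |∑ j, _| ≤ 2 * ∑ _j : Fin (n + 1), (n.factorial : ℝ) * exp (-π * ∑ i, u i ^ 2) / 2 := by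
        gcongr
        exact (Finset.abs_sum_le_sum_abs _ _).trans (Finset.sum_le_sum fun j _ => hterm j)
    _ = ((n + 1).factorial : ℝ) * exp (-π * ∑ i, u i ^ 2) := by
        rw [Finset.sum_const, Finset.card_univ, Fintype.card_fin, Nat.factorial_succ]
        push_cast
        ring

/-- The inductive step for the uniform bound `|M_r(𝓜;u)| ≤ r! e^{-π uᵀu}`:
given the bound `|M_{r-1}(Pⱼ𝓜_{[r]∖{j}}; t Pⱼu)| ≤ (r-1)! e^{-π t²‖Pⱼu‖²}` and
the integral identity
`M_r(𝓜;u) = 2∑ⱼ (m⁽ʲ⁾ᵀu/‖m⁽ʲ⁾‖) ∫₁^∞ e^{-πt²(m⁽ʲ⁾ᵀu)²/‖m⁽ʲ⁾‖²} M_{r-1}(…;tPⱼu) dt`,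
it follows that `|M_r(𝓜;u)| ≤ r! e^{-π uᵀu}`. Here `r = n + 1`, the rows of
`Pⱼ` form an orthonormal basis of the hyperplane orthogonal to the `j`-th
column `m⁽ʲ⁾` of `𝓜`. -/
theorem stmt_19 {n : ℕ} (M : Matrix (Fin (n + 1)) (Fin (n + 1)) ℝ)
    (hM : IsUnit M.det) (u : Fin (n + 1) → ℝ)
    (P : Fin (n + 1) → Matrix (Fin n) (Fin (n + 1)) ℝ)
    (hPorth : ∀ j, P j * (P j)ᵀ = 1)
    (hPm : ∀ j, (P j).mulVec (fun i => M i j) = 0)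
    (hPproj : ∀ j, (P j)ᵀ * P j =
      1 - Matrix.of (fun a b => M a j * M b j / (∑ i, M i j ^ 2)))
    (Mr : ℝ) (Mprev : Fin (n + 1) → ℝ → ℝ)
    (hbound : ∀ j t, |Mprev j t| ≤
      (Nat.factorial n : ℝ) * Real.exp (-Real.pi * ∑ i, (t * (P j).mulVec u i) ^ 2))
    (hidentity : Mr = 2 * ∑ j, ((∑ i, M i j * u i) / Real.sqrt (∑ i, M i j ^ 2)) *
      ∫ t in Set.Ioi (1 : ℝ),
        Real.exp (-Real.pi * t ^ 2 * (∑ i, M i j * u i) ^ 2 / (∑ i, M i j ^ 2)) *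
          Mprev j t) :
    |Mr| ≤ (Nat.factorial (n + 1) : ℝ) * Real.exp (-Real.pi * ∑ i, u i ^ 2) :=
  stmt_19_general M u P hPproj Mr Mprev hbound hidentity
end
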